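/- arXiv:2109.10081 — 3 statements merged into one kernel-verified Lean document; each statement's English description precedes it below -/
import Mathlib

section
/- With the setup of the previous statement (a short exact sequence 0 → A → B →π A → 0 of kG-modules satisfying the compatibility conditions for r and s), suppose additionally there is a commutative diagram of kG-modules comparing this sequence with a short exact sequence 0 → C →ι₀ C →π₀ A → 0 via maps π₀ : C → A (the left vertical), π₀' : C → B (the middle vertical) and identity on the right. Then the connecting homomorphism θ : H^*(G,A) → H^{*+1}(G,A) satisfies θ^n ∘ θ^{n−1} = 0 for all n ≥ 1; together with the graded-derivation property, (H^*(G,A), ∪, θ) is a differential graded algebra. -/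
/-- Coboundary on inhomogeneous group cochains, with the `G`-action given
explicitly by `ρ`. -/
def gd {G A : Type*} [Group G] [AddCommGroup A]
    (ρ : G → A → A) (n : ℕ) (φ : (Fin n → G) → A) : (Fin (n+1) → G) → A :=
  fun g => ρ (g 0) (φ fun i => g i.succ)
    + ∑ j : Fin (n+1), ((-1 : ℤ) ^ ((j : ℕ) + 1)) • φ (Fin.contractNth j (· * ·) g)

/-- Cup product of inhomogeneous cochains with coefficients in a `G`-algebra,
with the `G`-action given explicitly by `ρ`. -/
def cup {G A : Type*} [Group G] [Mul A]
    (ρ : G → A → A) {m n N : ℕ} (h : m + n = N)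
    (α : (Fin m → G) → A) (β : (Fin n → G) → A) : (Fin N → G) → A :=
  fun g => α (fun i => g ⟨(i : ℕ), by omega⟩) *
    ρ ((List.ofFn fun i : Fin m => g ⟨(i : ℕ), by omega⟩).prod)
      (β fun i => g ⟨m + (i : ℕ), by omega⟩)

/-!
Lift the cocycle `φ` along `π₀` to a cochain `φ_C` of `C`. Its coboundary lies in
`ker π₀ = im ι₀`, which yields a cocycle `σ` of `C` with `θ φ = π₀ ∘ σ + d E`: this is the
naturality of the connecting map along the comparison diagram. Then `π₀' ∘ σ + d (s ∘ E)` is a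
cocycle of `B` lifting `θ φ`, and `θ` sends any cochain `τ` with a cocycle lift `L` to the
coboundary of `r ∘ (s ∘ τ - L)`.
-/

universe u v w

section Cochains

variable {G A : Type*} [Group G] [AddCommGroup A]

theorem map_gd_comp {G' A' F : Type*} [Group G'] [AddCommGroup A'] [FunLike F A A']
    [AddMonoidHomClass F A A'] (ρ : G → A → A) (ρ' : G' → A' → A') (e : G' →* G) (f : F)
    (hf : ∀ g a, f (ρ (e g) a) = ρ' g (f a)) (n : ℕ) (φ : (Fin n → G) → A)
    (g : Fin (n + 1) → G') :
    f (gd ρ n φ (e ∘ g)) = gd ρ' n (fun u => f (φ (e ∘ u))) g := by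
  have he : ∀ j, e ∘ Fin.contractNth j (· * ·) g = Fin.contractNth j (· * ·) (e ∘ g) := by
    intro j
    funext i
    rcases lt_trichotomy (i : ℕ) j with h | h | h
    · simp [Fin.contractNth_apply_of_lt _ _ _ _ h]
    · simp [Fin.contractNth_apply_of_eq _ _ _ _ h]
    · simp [Fin.contractNth_apply_of_gt _ _ _ _ h]
  simp only [gd, map_add, map_sum, map_zsmul, he, ← hf]
  rfl

theorem map_gd {A' F : Type*} [AddCommGroup A'] [FunLike F A A'] [AddMonoidHomClass F A A']
    (ρ : G → A → A) (ρ' : G → A' → A') (f : F) (hf : ∀ g a, f (ρ g a) = ρ' g (f a))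
    (n : ℕ) (φ : (Fin n → G) → A) (g : Fin (n + 1) → G) :
    f (gd ρ n φ g) = gd ρ' n (fun u => f (φ u)) g :=
  map_gd_comp ρ ρ' (MonoidHom.id G) f hf n φ g

theorem gd_add (ρ : G → A → A) (hρadd : ∀ g a a', ρ g (a + a') = ρ g a + ρ g a')
    (n : ℕ) (φ ψ : (Fin n → G) → A) : gd ρ n (φ + ψ) = gd ρ n φ + gd ρ n ψ := by
  funext g
  simp only [gd, Pi.add_apply, hρadd, smul_add, Finset.sum_add_distrib]
  abel

end Cochains

open groupCohomology in
theorem gd_eq_inhomogeneousCochains_d {k G A : Type u} [CommRing k] [Group G] [AddCommGroup A]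
    [Module k A] (ρ : Representation k G A) (n : ℕ) (φ : (Fin n → G) → A) :
    gd (fun g => ρ g) n φ = (inhomogeneousCochains.d (Rep.of ρ) n).hom φ := by
  funext g
  simp only [gd, inhomogeneousCochains.d_hom_apply, ← Int.cast_smul_eq_zsmul k, Int.cast_pow,
    Int.cast_neg, Int.cast_one]

theorem gd_gd_of_representation {k G A : Type u} [CommRing k] [Group G] [AddCommGroup A]
    [Module k A] (ρ : Representation k G A) (n : ℕ) (φ : (Fin n → G) → A) :
    gd (fun g => ρ g) (n + 1) (gd (fun g => ρ g) n φ) = 0 := by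
  rw [gd_eq_inhomogeneousCochains_d, gd_eq_inhomogeneousCochains_d, ← ModuleCat.comp_apply,
    groupCohomology.inhomogeneousCochains.d_comp_d]
  rfl

-- `groupCohomology` needs the ring, the group and the module in a single universe.
def uliftRepresentation {G : Type v} {A : Type w} [Group G] [AddCommGroup A] (ρ : G → A → A)
    (hρ1 : ∀ a, ρ 1 a = a) (hρmul : ∀ g h a, ρ (g * h) a = ρ g (ρ h a))
    (hρadd : ∀ g a a', ρ g (a + a') = ρ g a + ρ g a') :
    Representation (ULift.{max v w} ℤ) (ULift.{w} G) (ULift.{v} A) where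
  toFun g :=
    { toFun a := ⟨ρ g.down a.down⟩
      map_add' a a' := congrArg ULift.up (hρadd g.down a.down a'.down)
      map_smul' c a :=
        congrArg ULift.up (map_zsmul (AddMonoidHom.mk' (ρ g.down) (hρadd g.down)) c.down a.down) }
  map_one' := LinearMap.ext fun a => congrArg ULift.up (hρ1 a.down)
  map_mul' g h := LinearMap.ext fun a => congrArg ULift.up (hρmul g.down h.down a.down)

theorem gd_gd {G : Type v} {A : Type w} [Group G] [AddCommGroup A] (ρ : G → A → A)
    (hρ1 : ∀ a, ρ 1 a = a) (hρmul : ∀ g h a, ρ (g * h) a = ρ g (ρ h a))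
    (hρadd : ∀ g a a', ρ g (a + a') = ρ g a + ρ g a') (n : ℕ) (φ : (Fin n → G) → A) :
    gd ρ (n + 1) (gd ρ n φ) = 0 := by
  set ρ' := uliftRepresentation ρ hρ1 hρmul hρadd
  have hup : ∀ m (ψ : (Fin m → G) → A) (g : Fin (m + 1) → ULift G),
      ULift.up (gd ρ m ψ (ULift.down ∘ g))
        = gd (fun g => ρ' g) m (fun u => ULift.up (ψ (ULift.down ∘ u))) g :=
    map_gd_comp ρ _ MulEquiv.ulift.toMonoidHom AddEquiv.ulift.symm (fun _ _ => rfl)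
  funext g
  apply ULift.up_injective
  calc ULift.up (gd ρ (n + 1) (gd ρ n φ) g)
      = gd (fun g => ρ' g) (n + 1) (fun u => ULift.up (gd ρ n φ (ULift.down ∘ u)))
          (ULift.up ∘ g) := hup _ _ _
    _ = gd (fun g => ρ' g) (n + 1) (gd (fun g => ρ' g) n fun u => ULift.up (φ (ULift.down ∘ u)))
          (ULift.up ∘ g) := by simp only [hup]
    _ = ULift.up 0 := by rw [gd_gd_of_representation]; rfl

section Connecting

variable {G A B C : Type*} [Group G] [AddCommGroup A] [AddCommGroup B] [AddCommGroup C]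

/-- The connecting map `θ` of `0 → A →ι B →π A → 0` on cochains, for a set-theoretic section `s`
of `π` and a left inverse `r` of `ι` on `ker π`. -/
def connecting (ρB : G → B → B) (r : B → A) (s : A → B) {n : ℕ} (φ : (Fin n → G) → A) :
    (Fin (n + 1) → G) → A :=
  fun g => r (gd ρB n (fun u => s (φ u)) g)

theorem exists_connecting_eq_gd_of_lift (ρA : G → A → A) (ρB : G → B → B)
    (hρBadd : ∀ g b b', ρB g (b + b') = ρB g b + ρB g b')
    (ι : A →+ B) (π : B →+ A) (hιG : ∀ g a, ι (ρA g a) = ρB g (ι a))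
    (r : B → A) (hrι : ∀ a, r (ι a) = a) (hιr : ∀ b, π b = 0 → ι (r b) = b)
    (s : A → B) (hs : ∀ a, π (s a) = a) {n : ℕ} (τ : (Fin n → G) → A)
    (L : (Fin n → G) → B) (hπL : ∀ g, π (L g) = τ g) (hL : gd ρB n L = 0) :
    ∃ ψ, connecting ρB r s τ = gd ρA n ψ := by
  set ψ := fun g => r (s (τ g) - L g)
  have hsτ : (fun g => s (τ g)) = L + fun g => ι (ψ g) := by
    funext g
    rw [Pi.add_apply, hιr _ (by rw [map_sub, hs, hπL, sub_self]), add_sub_cancel]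
  refine ⟨ψ, funext fun g => ?_⟩
  rw [connecting, hsτ, gd_add ρB hρBadd, hL, zero_add, ← map_gd ρA ρB ι hιG, hrι]

theorem exists_cocycle_lifting_comp_add_gd (ρA : G → A → A) (ρB : G → B → B) (ρC : G → C → C)
    (hρB1 : ∀ b, ρB 1 b = b) (hρBmul : ∀ g h b, ρB (g * h) b = ρB g (ρB h b))
    (hρBadd : ∀ g b b', ρB g (b + b') = ρB g b + ρB g b')
    (π : B →+ A) (hπG : ∀ g b, π (ρB g b) = ρA g (π b)) (s : A → B) (hs : ∀ a, π (s a) = a)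
    (π₀ : C →+ A) (π₀' : C →+ B) (hπ₀'G : ∀ g c, π₀' (ρC g c) = ρB g (π₀' c))
    (hcomm₂ : ∀ c, π (π₀' c) = π₀ c) {n : ℕ} (σ : (Fin (n + 1) → G) → C)
    (hσ : gd ρC (n + 1) σ = 0) (E : (Fin n → G) → A) :
    ∃ L : (Fin (n + 1) → G) → B, gd ρB (n + 1) L = 0 ∧ ∀ g, π (L g) = π₀ (σ g) + gd ρA n E g := by
  refine ⟨(fun g => π₀' (σ g)) + gd ρB n (fun u => s (E u)), ?_, fun g => ?_⟩
  · funext g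
    rw [gd_add ρB hρBadd, gd_gd ρB hρB1 hρBmul hρBadd, Pi.add_apply, ← map_gd ρC ρB π₀' hπ₀'G,
      hσ]
    simp
  · rw [Pi.add_apply, map_add, hcomm₂, map_gd ρB ρA π hπG]
    simp only [hs]

theorem exists_cocycle_connecting_eq_comp_add_gd (ρA : G → A → A) (ρB : G → B → B)
    (ρC : G → C → C) (hρBadd : ∀ g b b', ρB g (b + b') = ρB g b + ρB g b')
    (hρC1 : ∀ c, ρC 1 c = c) (hρCmul : ∀ g h c, ρC (g * h) c = ρC g (ρC h c))
    (hρCadd : ∀ g c c', ρC g (c + c') = ρC g c + ρC g c')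
    (ι : A →+ B) (π : B →+ A) (hιG : ∀ g a, ι (ρA g a) = ρB g (ι a))
    (r : B → A) (hrι : ∀ a, r (ι a) = a) (hιr : ∀ b, π b = 0 → ι (r b) = b)
    (s : A → B) (hs : ∀ a, π (s a) = a)
    (ι₀ : C →+ C) (π₀ : C →+ A) (π₀' : C →+ B)
    (hι₀G : ∀ g c, ι₀ (ρC g c) = ρC g (ι₀ c)) (hπ₀G : ∀ g c, π₀ (ρC g c) = ρA g (π₀ c))
    (hπ₀'G : ∀ g c, π₀' (ρC g c) = ρB g (π₀' c))
    (hinj₀ : Function.Injective ι₀) (hsurj₀ : Function.Surjective π₀)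
    (hexact₀ : ∀ c, π₀ c = 0 → ∃ c', ι₀ c' = c)
    (hcomm₁ : ∀ c, ι (π₀ c) = π₀' (ι₀ c)) (hcomm₂ : ∀ c, π (π₀' c) = π₀ c)
    {n : ℕ} (φ : (Fin n → G) → A) (hφ : gd ρA n φ = 0) :
    ∃ (σ : (Fin (n + 1) → G) → C) (E : (Fin n → G) → A), gd ρC (n + 1) σ = 0 ∧
      connecting ρB r s φ = (fun g => π₀ (σ g)) + gd ρA n E := by
  choose φC hφC using fun u => hsurj₀ (φ u)
  have hdφC : ∀ g, π₀ (gd ρC n φC g) = 0 := fun g => by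
    rw [map_gd ρC ρA π₀ hπ₀G, show (fun u => π₀ (φC u)) = φ from funext hφC, hφ]
    rfl
  choose σ hσ using fun g => hexact₀ _ (hdφC g)
  set E := fun u => r (s (φ u) - π₀' (φC u))
  have hsφ : (fun u => s (φ u)) = (fun u => π₀' (φC u)) + fun u => ι (E u) := by
    funext u
    rw [Pi.add_apply, hιr _ (by rw [map_sub, hs, hcomm₂, hφC, sub_self]), add_sub_cancel]
  refine ⟨σ, E, funext fun g => hinj₀ ?_, funext fun g => ?_⟩
  · rw [map_gd ρC ρC ι₀ hι₀G, show (fun u => ι₀ (σ u)) = gd ρC n φC from funext hσ,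
      gd_gd ρC hρC1 hρCmul hρCadd]
    simp
  · rw [connecting, hsφ, gd_add ρB hρBadd, Pi.add_apply, ← map_gd ρC ρB π₀' hπ₀'G,
      ← map_gd ρA ρB ι hιG, ← hσ, ← hcomm₁, ← map_add, hrι]
    rfl

end Connecting

theorem stmt6_general {k G A B : Type*} [CommRing k] [Group G]
    [Ring A] [Algebra k A] [Ring B] [Algebra k B]
    (ρA : G → A → A) (ρB : G → B → B)
    -- `B` is a `k`-algebra and a `kG`-module
    (hρB1 : ∀ b, ρB 1 b = b)
    (hρBmul : ∀ g h b, ρB (g * h) b = ρB g (ρB h b))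
    (hρBadd : ∀ g b b', ρB g (b + b') = ρB g b + ρB g b')
    -- short exact sequence `0 → A →ι B →π A → 0` of `kG`-modules, `Ker π` an ideal
    (ι : A →ₗ[k] B) (π : B →ₗ[k] A)
    (hιG : ∀ g a, ι (ρA g a) = ρB g (ι a))
    (hπG : ∀ g b, π (ρB g b) = ρA g (π b))
    -- `r : Ker π → A` inverse of `ι'`, with the compatibility conditions
    (r : B → A)
    (hrι : ∀ a, r (ι a) = a)
    (hιr : ∀ b, π b = 0 → ι (r b) = b)
    -- set-theoretic section `s` of `π`, multiplicative up to `Ker π`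
    (s : A → B) (hs : ∀ a, π (s a) = a)
    -- the comparison diagram with a second short exact sequence 0 → C → C → A → 0
    {C : Type*} [AddCommGroup C] [Module k C]
    (ρC : G → C → C)
    (hρC1 : ∀ c, ρC 1 c = c)
    (hρCmul : ∀ g h c, ρC (g * h) c = ρC g (ρC h c))
    (hρCadd : ∀ g c c', ρC g (c + c') = ρC g c + ρC g c')
    (ι₀ : C →ₗ[k] C) (π₀ : C →ₗ[k] A) (π₀' : C →ₗ[k] B)
    (hι₀G : ∀ g c, ι₀ (ρC g c) = ρC g (ι₀ c))
    (hπ₀G : ∀ g c, π₀ (ρC g c) = ρA g (π₀ c))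
    (hπ₀'G : ∀ g c, π₀' (ρC g c) = ρB g (π₀' c))
    (hinj₀ : Function.Injective ι₀) (hsurj₀ : Function.Surjective π₀)
    (hexact₀ : ∀ c, π₀ c = 0 ↔ ∃ c', ι₀ c' = c)
    (hcomm₁ : ∀ c, ι (π₀ c) = π₀' (ι₀ c))
    (hcomm₂ : ∀ c, π (π₀' c) = π₀ c)
    -- a cocycle `φ ∈ Z^n(G,A)`
    (n : ℕ) (φ : (Fin n → G) → A) (hφ : gd ρA n φ = 0) :
    ∃ ψ : (Fin (n+1) → G) → A,
      (fun g => r (gd ρB (n+1)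
          (fun t => s (r (gd ρB n (fun u => s (φ u)) t))) g))
        = gd ρA (n+1) ψ := by
  obtain ⟨σ, E, hσ, hθφ⟩ := exists_cocycle_connecting_eq_comp_add_gd ρA ρB ρC hρBadd
    hρC1 hρCmul hρCadd ι.toAddMonoidHom π.toAddMonoidHom hιG r hrι hιr s hs
    ι₀.toAddMonoidHom π₀.toAddMonoidHom π₀'.toAddMonoidHom hι₀G hπ₀G hπ₀'G hinj₀ hsurj₀
    (fun c => (hexact₀ c).1) hcomm₁ hcomm₂ φ hφ
  obtain ⟨L, hL, hπL⟩ := exists_cocycle_lifting_comp_add_gd ρA ρB ρC hρB1 hρBmul hρBadd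
    π.toAddMonoidHom hπG s hs π₀.toAddMonoidHom π₀'.toAddMonoidHom hπ₀'G hcomm₂ σ hσ E
  exact exists_connecting_eq_gd_of_lift ρA ρB hρBadd ι.toAddMonoidHom π.toAddMonoidHom hιG
    r hrι hιr s hs (connecting ρB r s φ) L (fun g => (hπL g).trans (congrFun hθφ g).symm) hL

/-- if moreover the short exact sequence `0 → A → B →π A → 0` is
compared, via a commutative diagram, with a short exact sequence
`0 → C →ι₀ C →π₀ A → 0` of `kG`-modules (with verticals `π₀ : C → A`,
`π₀' : C → B` and the identity on the right), then the connecting homomorphism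
`θ` squares to zero on cohomology: for any cocycle `φ`, `θ(θ(φ))` is a
coboundary.  Together with the graded-derivation property this makes
`(H^*(G,A), ∪, θ)` a DG-algebra. -/
theorem stmt6 {k G A B : Type*} [CommRing k] [Group G] [Fintype G]
    [Ring A] [Algebra k A] [Ring B] [Algebra k B]
    (ρA : G → A → A) (ρB : G → B → B)
    -- `G` acts on the `k`-algebra `A` by algebra automorphisms
    (hρA1 : ∀ a, ρA 1 a = a)
    (hρAmul : ∀ g h a, ρA (g * h) a = ρA g (ρA h a))
    (hρAadd : ∀ g a a', ρA g (a + a') = ρA g a + ρA g a')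
    (hρAsmul : ∀ g (c : k) a, ρA g (c • a) = c • ρA g a)
    (hρAring : ∀ g a a', ρA g (a * a') = ρA g a * ρA g a')
    -- `B` is a `k`-algebra and a `kG`-module
    (hρB1 : ∀ b, ρB 1 b = b)
    (hρBmul : ∀ g h b, ρB (g * h) b = ρB g (ρB h b))
    (hρBadd : ∀ g b b', ρB g (b + b') = ρB g b + ρB g b')
    (hρBsmul : ∀ g (c : k) b, ρB g (c • b) = c • ρB g b)
    -- short exact sequence `0 → A →ι B →π A → 0` of `kG`-modules, `Ker π` an ideal
    (ι : A →ₗ[k] B) (π : B →ₗ[k] A)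
    (hιG : ∀ g a, ι (ρA g a) = ρB g (ι a))
    (hπG : ∀ g b, π (ρB g b) = ρA g (π b))
    (hinj : Function.Injective ι) (hsurj : Function.Surjective π)
    (hexact : ∀ b, π b = 0 ↔ ∃ a, ι a = b)
    (hker : ∀ b b', π b = 0 → π (b * b') = 0 ∧ π (b' * b) = 0)
    -- `r : Ker π → A` inverse of `ι'`, with the compatibility conditions
    (r : B → A)
    (hrι : ∀ a, r (ι a) = a)
    (hιr : ∀ b, π b = 0 → ι (r b) = b)
    (hradd : ∀ b b', π b = 0 → π b' = 0 → r (b + b') = r b + r b')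
    (hrsmul : ∀ (c : k) b, π b = 0 → r (c • b) = c • r b)
    (hrG : ∀ g b, π b = 0 → r (ρB g b) = ρA g (r b))
    (hr2 : ∀ (g : G) b₁ b₂, π b₁ = 0 → r (b₁ * ρB g b₂) = r b₁ * ρA g (π b₂))
    (hr3 : ∀ (g : G) b₁ b₂, π b₂ = 0 → r (b₁ * ρB g b₂) = π b₁ * ρA g (r b₂))
    -- set-theoretic section `s` of `π`, multiplicative up to `Ker π`
    (s : A → B) (hs : ∀ a, π (s a) = a)
    (hsmul : ∀ (g : G) a₁ a₂, π (s (a₁ * ρA g a₂) - s a₁ * ρB g (s a₂)) = 0)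
    -- the comparison diagram with a second short exact sequence 0 → C → C → A → 0
    {C : Type*} [AddCommGroup C] [Module k C]
    (ρC : G → C → C)
    (hρC1 : ∀ c, ρC 1 c = c)
    (hρCmul : ∀ g h c, ρC (g * h) c = ρC g (ρC h c))
    (hρCadd : ∀ g c c', ρC g (c + c') = ρC g c + ρC g c')
    (hρCsmul : ∀ g (c0 : k) c, ρC g (c0 • c) = c0 • ρC g c)
    (ι₀ : C →ₗ[k] C) (π₀ : C →ₗ[k] A) (π₀' : C →ₗ[k] B)
    (hι₀G : ∀ g c, ι₀ (ρC g c) = ρC g (ι₀ c))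
    (hπ₀G : ∀ g c, π₀ (ρC g c) = ρA g (π₀ c))
    (hπ₀'G : ∀ g c, π₀' (ρC g c) = ρB g (π₀' c))
    (hinj₀ : Function.Injective ι₀) (hsurj₀ : Function.Surjective π₀)
    (hexact₀ : ∀ c, π₀ c = 0 ↔ ∃ c', ι₀ c' = c)
    (hcomm₁ : ∀ c, ι (π₀ c) = π₀' (ι₀ c))
    (hcomm₂ : ∀ c, π (π₀' c) = π₀ c)
    -- a cocycle `φ ∈ Z^n(G,A)`
    (n : ℕ) (φ : (Fin n → G) → A) (hφ : gd ρA n φ = 0) :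
    ∃ ψ : (Fin (n+1) → G) → A,
      (fun g => r (gd ρB (n+1)
          (fun t => s (r (gd ρB n (fun u => s (φ u)) t))) g))
        = gd ρA (n+1) ψ :=
  stmt6_general ρA ρB hρB1 hρBmul hρBadd ι π hιG hπG r hrι hιr s hs ρC hρC1 hρCmul hρCadd ι₀ π₀ π₀'
    hι₀G hπ₀G hπ₀'G hinj₀ hsurj₀ hexact₀ hcomm₁ hcomm₂ n φ hφ
end

section
/- With the same hypotheses, the bracket [x⊗α, y⊗β] = xy ⊗ ((−1)^{|α|} θ_y(α)·β + α·θ_x(β)) on KG ⊗ H* satisfies the Poisson identity for a P_0 algebra: [x⊗α, (y⊗β)·(z⊗γ)] = [x⊗α, y⊗β]·(z⊗γ) + (−1)^{(|α|+1)|β|} (y⊗β)·[x⊗α, z⊗γ] for all x,y,z ∈ G and homogeneous α, β, γ ∈ H*. -/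
/-!
Both sides are of the form `single (x * y * z) 1 ⊗ₜ _`, so the identity reduces to one in `A`.
Expanding `θ_x (β * γ)` by the Leibniz rule and `θ_{yz} = θ_y + θ_z`, the terms match once `β`
is moved past `θ_z α` (degree `m + 1`) and past `α` (degree `m`) by graded commutativity; the
resulting signs cancel against `(-1)^((m+1) n)` because `(-1)^k (-1)^k = 1`.
-/

open TensorProduct

/-- The BD bracket on homogeneous elements of `KG ⊗ H*`:
`[x ⊗ α, y ⊗ β] = xy ⊗ ((−1)^{|α|} θ_y(α)·β + α·θ_x(β))`, where `m = |α|`. -/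
noncomputable def brkt {K G A : Type*} [Field K] [CommGroup G] [Ring A] [Algebra K A]
    (θ : G → A →ₗ[K] A) (x : G) (m : ℤ) (α : A) (y : G) (β : A) :
    MonoidAlgebra K G ⊗[K] A :=
  MonoidAlgebra.single (x*y) (1:K) ⊗ₜ[K] (((-1:K)^m) • (θ y α * β) + α * θ x β)

theorem neg_one_zpow_mul_self {K : Type*} [DivisionRing K] (k : ℤ) :
    (-1 : K) ^ k * (-1) ^ k = 1 := by
  rw [← zpow_add₀ (neg_ne_zero.mpr one_ne_zero), Even.neg_one_zpow ⟨k, rfl⟩]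

theorem MonoidAlgebra.single_one_tmul_mul_single_one_tmul {K G A : Type*} [CommSemiring K]
    [Monoid G] [Semiring A] [Algebra K A] (g h : G) (a b : A) :
    (MonoidAlgebra.single g (1 : K) ⊗ₜ[K] a) * (MonoidAlgebra.single h (1 : K) ⊗ₜ[K] b)
      = MonoidAlgebra.single (g * h) (1 : K) ⊗ₜ[K] (a * b) := by
  rw [Algebra.TensorProduct.tmul_mul_tmul, MonoidAlgebra.single_mul_single, mul_one]

section GradedCommutative

variable {K A : Type*} [Field K] [Ring A] [Algebra K A] {𝒜 : ℤ → Submodule K A}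

theorem neg_one_zpow_smul_mul_of_gradedComm
    (hcomm : ∀ (m n : ℤ) (a b : A), a ∈ 𝒜 m → b ∈ 𝒜 n → a * b = ((-1 : K) ^ (m * n)) • (b * a))
    {m n : ℤ} {a b : A} (ha : a ∈ 𝒜 m) (hb : b ∈ 𝒜 n) :
    ((-1 : K) ^ (m * n)) • (a * b) = b * a := by
  rw [hcomm m n a b ha hb, smul_smul, neg_one_zpow_mul_self, one_smul]

variable {G : Type*} [Mul G]

def brktCoeff (θ : G → A →ₗ[K] A) (x : G) (m : ℤ) (α : A) (y : G) (β : A) : A :=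
  ((-1 : K) ^ m) • (θ y α * β) + α * θ x β

theorem brkt_eq_single_tmul_brktCoeff {G : Type*} [CommGroup G] (θ : G → A →ₗ[K] A) (x : G)
    (m : ℤ) (α : A) (y : G) (β : A) :
    brkt θ x m α y β = MonoidAlgebra.single (x * y) (1 : K) ⊗ₜ[K] brktCoeff θ x m α y β :=
  rfl

theorem brktCoeff_mul_right
    (hcomm : ∀ (m n : ℤ) (a b : A), a ∈ 𝒜 m → b ∈ 𝒜 n → a * b = ((-1 : K) ^ (m * n)) • (b * a))
    (θ : G → A →ₗ[K] A)
    (hθdeg : ∀ (x : G) (m : ℤ) a, a ∈ 𝒜 m → θ x a ∈ 𝒜 (m + 1))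
    (hθder : ∀ (x : G) (m : ℤ) (a b : A), a ∈ 𝒜 m →
      θ x (a * b) = θ x a * b + ((-1 : K) ^ m) • (a * θ x b))
    (hθadd : ∀ x y : G, θ (x * y) = θ x + θ y)
    (x y z : G) {m n : ℤ} {α β : A} (γ : A) (hα : α ∈ 𝒜 m) (hβ : β ∈ 𝒜 n) :
    brktCoeff θ x m α (y * z) (β * γ)
      = brktCoeff θ x m α y β * γ
        + ((-1 : K) ^ ((m + 1) * n)) • (β * brktCoeff θ x m α z γ) := by
  have swap_θα : ((-1 : K) ^ ((m + 1) * n)) • (β * θ z α) = θ z α * β := by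
    rw [mul_comm (m + 1)]
    exact neg_one_zpow_smul_mul_of_gradedComm hcomm hβ (hθdeg z m α hα)
  have swap_α : ((-1 : K) ^ ((m + 1) * n)) • (β * α) = ((-1 : K) ^ n) • (α * β) := by
    rw [add_one_mul, zpow_add₀ (neg_ne_zero.mpr one_ne_zero), mul_comm, ← smul_smul, mul_comm m,
      neg_one_zpow_smul_mul_of_gradedComm hcomm hβ hα]
  have expand : ((-1 : K) ^ ((m + 1) * n)) • (β * brktCoeff θ x m α z γ)
      = ((-1 : K) ^ m) • ((((-1 : K) ^ ((m + 1) * n)) • (β * θ z α)) * γ)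
        + (((-1 : K) ^ ((m + 1) * n)) • (β * α)) * θ x γ := by
    simp only [brktCoeff, mul_add, smul_add, mul_smul_comm, smul_mul_assoc, mul_assoc, smul_smul,
      mul_comm]
  rw [expand, swap_θα, swap_α]
  simp only [brktCoeff, hθadd, LinearMap.add_apply, hθder x n β γ hβ, add_mul, mul_add, smul_add,
    smul_mul_assoc, mul_smul_comm, mul_assoc]
  abel

end GradedCommutative

theorem stmt12_general {K G A : Type*} [Field K] [CommGroup G] [Ring A] [Algebra K A]
    (𝒜 : ℤ → Submodule K A)
    (hcomm : ∀ (m n : ℤ) (a b : A), a ∈ 𝒜 m → b ∈ 𝒜 n →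
      a * b = ((-1:K)^(m*n)) • (b * a))
    (θ : G → A →ₗ[K] A)
    (hθdeg : ∀ (x : G) (m : ℤ) a, a ∈ 𝒜 m → θ x a ∈ 𝒜 (m+1))
    (hθder : ∀ (x : G) (m : ℤ) (a b : A), a ∈ 𝒜 m →
      θ x (a * b) = θ x a * b + ((-1:K)^m) • (a * θ x b))
    (hθadd : ∀ x y : G, θ (x*y) = θ x + θ y)
    (x y z : G) (m n : ℤ) (α β γ : A)
    (hα : α ∈ 𝒜 m) (hβ : β ∈ 𝒜 n) :
    brkt θ x m α (y*z) (β * γ)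
      = brkt θ x m α y β * (MonoidAlgebra.single z (1:K) ⊗ₜ[K] γ)
        + ((-1:K)^((m+1)*n)) •
          ((MonoidAlgebra.single y (1:K) ⊗ₜ[K] β) * brkt θ x m α z γ) := by
  simp only [brkt_eq_single_tmul_brktCoeff, MonoidAlgebra.single_one_tmul_mul_single_one_tmul,
    brktCoeff_mul_right hcomm θ hθdeg hθder hθadd x y z γ hα hβ, tmul_add, tmul_smul]
  rw [mul_left_comm y x z, mul_assoc]

/-- the bracket on `KG ⊗ H*` satisfies the Poisson identity of a
`P₀` algebra:
`[x⊗α, (y⊗β)·(z⊗γ)] = [x⊗α, y⊗β]·(z⊗γ) + (−1)^{(|α|+1)|β|} (y⊗β)·[x⊗α, z⊗γ]`. -/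
theorem stmt12 {K G A : Type*} [Field K] [CommGroup G] [Ring A] [Algebra K A]
    (𝒜 : ℤ → Submodule K A) [SetLike.GradedMonoid 𝒜]
    (hcomm : ∀ (m n : ℤ) (a b : A), a ∈ 𝒜 m → b ∈ 𝒜 n →
      a * b = ((-1:K)^(m*n)) • (b * a))
    (θ : G → A →ₗ[K] A)
    (hθdeg : ∀ (x : G) (m : ℤ) a, a ∈ 𝒜 m → θ x a ∈ 𝒜 (m+1))
    (hθder : ∀ (x : G) (m : ℤ) (a b : A), a ∈ 𝒜 m →
      θ x (a * b) = θ x a * b + ((-1:K)^m) • (a * θ x b))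
    (hθadd : ∀ x y : G, θ (x*y) = θ x + θ y)
    (hθcomp : ∀ x y : G, (θ x) ∘ₗ (θ y) = 0)
    (x y z : G) (m n t : ℤ) (α β γ : A)
    (hα : α ∈ 𝒜 m) (hβ : β ∈ 𝒜 n) (hγ : γ ∈ 𝒜 t) :
    brkt θ x m α (y*z) (β * γ)
      = brkt θ x m α y β * (MonoidAlgebra.single z (1:K) ⊗ₜ[K] γ)
        + ((-1:K)^((m+1)*n)) •
          ((MonoidAlgebra.single y (1:K) ⊗ₜ[K] β) * brkt θ x m α z γ) :=
  stmt12_general 𝒜 hcomm θ hθdeg hθder hθadd x y z m n α β γ hα hβ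
end

section
/- With the same hypotheses, the bracket [x⊗α, y⊗β] = xy ⊗ ((−1)^{|α|} θ_y(α)·β + α·θ_x(β)) satisfies the graded Jacobi identity for the shift (KG ⊗ H*)[−1]: for all x,y,z ∈ G and homogeneous α, β, γ of degrees m, n, t, one has (−1)^{(m−1)(t−1)}[[x⊗α, y⊗β], z⊗γ] + (−1)^{(n−1)(m−1)}[[y⊗β, z⊗γ], x⊗α] + (−1)^{(t−1)(n−1)}[[z⊗γ, x⊗α], y⊗β] = 0. -/
/-!
Each summand is `single (xyz) 1 ⊗ₜ J`, where `J = jacobiTerm` is evaluated at a cyclic shift of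
`(x, α), (y, β), (z, γ)`. Because all compositions `θ_u ∘ θ_v` vanish, `θ_z` applied to the inner
bracket is just `θ_z α · θ_x β − θ_y α · θ_z β`, and `J(x,y,z)` becomes six monomials in the order
`α, β, γ`. Three of them form `P(x,y,z) = jacobiPotential`; moving `α` to the front by graded
commutativity, the other three are exactly `−P(y,z,x)`. Hence `J(x,y,z) = P(x,y,z) − P(y,z,x)`
and the cyclic sum telescopes.
-/

open TensorProduct

theorem neg_one_zpow_eq_of_cast_zmod_two {K : Type*} [DivisionRing K] {a b : ℤ}
    (h : (a : ZMod 2) = b) : (-1 : K) ^ a = (-1 : K) ^ b := by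
  have : a.negOnePow = b.negOnePow := by
    rw [Int.negOnePow_eq_iff, ← ZMod.intCast_eq_zero_iff_even, Int.cast_sub, h, sub_self]
  rw [← Int.cast_negOnePow, ← Int.cast_negOnePow, this]

theorem neg_one_zpow_eq_neg_of_cast_zmod_two {K : Type*} [DivisionRing K] {a b : ℤ}
    (h : (a : ZMod 2) = b + 1) : (-1 : K) ^ a = -(-1 : K) ^ b := by
  rw [neg_one_zpow_eq_of_cast_zmod_two (b := b + 1) (by push_cast; exact h),
    zpow_add_one₀ (neg_ne_zero.2 one_ne_zero), mul_neg_one]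

section

variable {K G A : Type*} [Field K] [Ring A] [Algebra K A]

def IsGradedCommutative (𝒜 : ℤ → Submodule K A) : Prop :=
  ∀ (m n : ℤ) (a b : A), a ∈ 𝒜 m → b ∈ 𝒜 n → a * b = (-1 : K) ^ (m * n) • (b * a)

structure IsGradedDerivation (𝒜 : ℤ → Submodule K A) (d : A →ₗ[K] A) : Prop where
  map_mem : ∀ (m : ℤ) a, a ∈ 𝒜 m → d a ∈ 𝒜 (m + 1)
  map_mul : ∀ (m : ℤ) (a b : A), a ∈ 𝒜 m → d (a * b) = d a * b + (-1 : K) ^ m • (a * d b)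

def brktH (θ : G → A →ₗ[K] A) (x : G) (m : ℤ) (α : A) (y : G) (β : A) : A :=
  (-1 : K) ^ m • (θ y α * β) + α * θ x β

def jacobiTerm [Mul G] (θ : G → A →ₗ[K] A) (x : G) (m : ℤ) (α : A) (y : G) (n : ℤ) (β : A)
    (z : G) (t : ℤ) (γ : A) : A :=
  (-1 : K) ^ ((m - 1) * (t - 1)) • brktH θ (x * y) (m + n + 1) (brktH θ x m α y β) z γ

def jacobiPotential (θ : G → A →ₗ[K] A) (x : G) (m : ℤ) (α : A) (y : G) (n : ℤ) (β : A)
    (z : G) (t : ℤ) (γ : A) : A :=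
  (-1 : K) ^ ((m - 1) * (t - 1)) •
    ((-1 : K) ^ (m + n + 1) • (θ z α * θ x β * γ) + brktH θ x m α y β * θ x γ)

variable {𝒜 : ℤ → Submodule K A} {θ : G → A →ₗ[K] A}

theorem map_brktH {w x y : G} {m : ℤ} {α : A} (β : A)
    (hw : IsGradedDerivation 𝒜 (θ w)) (hy : IsGradedDerivation 𝒜 (θ y))
    (hwx : θ w ∘ₗ θ x = 0) (hwy : θ w ∘ₗ θ y = 0) (hα : α ∈ 𝒜 m) :
    θ w (brktH θ x m α y β) = θ w α * θ x β - θ y α * θ w β := by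
  have hwyα : θ w (θ y α) = 0 := LinearMap.congr_fun hwy α
  have hwxβ : θ w (θ x β) = 0 := LinearMap.congr_fun hwx β
  have hsign : (-1 : K) ^ m * (-1 : K) ^ (m + 1) = -1 := by
    rw [zpow_add_one₀ (neg_ne_zero.2 one_ne_zero), ← mul_assoc, ← mul_zpow, neg_one_mul, neg_neg,
      one_zpow, one_mul]
  rw [brktH, map_add, map_smul, hw.map_mul _ _ _ (hy.map_mem m α hα), hw.map_mul m α _ hα,
    hwyα, hwxβ, zero_mul, zero_add, mul_zero, smul_zero, add_zero, smul_smul, hsign]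
  module

theorem jacobiTerm_eq_add [Mul G] {x y z : G} {m : ℤ} {α : A} (n : ℤ) (β : A) {t : ℤ} (γ : A)
    (hxy : θ (x * y) = θ x + θ y) (hy : IsGradedDerivation 𝒜 (θ y))
    (hz : IsGradedDerivation 𝒜 (θ z)) (hzx : θ z ∘ₗ θ x = 0) (hzy : θ z ∘ₗ θ y = 0)
    (hα : α ∈ 𝒜 m) :
    jacobiTerm θ x m α y n β z t γ = jacobiPotential θ x m α y n β z t γ +
      (-1 : K) ^ ((m - 1) * (t - 1)) •
        (brktH θ x m α y β * θ y γ - (-1 : K) ^ (m + n + 1) • (θ y α * θ z β * γ)) := by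
  rw [jacobiTerm, jacobiPotential, brktH.eq_1 θ (x * y), map_brktH β hz hy hzx hzy hα, hxy,
    LinearMap.add_apply]
  simp only [sub_mul, mul_add]
  module

theorem smul_sub_eq_neg_jacobiPotential [SetLike.GradedMonoid 𝒜] (hcomm : IsGradedCommutative 𝒜)
    {x y z : G} {m n t : ℤ} {α β γ : A}
    (hx : IsGradedDerivation 𝒜 (θ x)) (hy : IsGradedDerivation 𝒜 (θ y))
    (hz : IsGradedDerivation 𝒜 (θ z)) (hα : α ∈ 𝒜 m) (hβ : β ∈ 𝒜 n) (hγ : γ ∈ 𝒜 t) :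
    (-1 : K) ^ ((m - 1) * (t - 1)) •
        (brktH θ x m α y β * θ y γ - (-1 : K) ^ (m + n + 1) • (θ y α * θ z β * γ)) =
      -jacobiPotential θ y n β z t γ x m α := by
  have hxβ := hx.map_mem n β hβ
  have hyγ := hy.map_mem t γ hγ
  have hyα := hy.map_mem m α hα
  have hzβ := hz.map_mem n β hβ
  have c1 : θ x β * θ y γ * α = (-1 : K) ^ ((n + 1 + (t + 1)) * m) • (α * θ x β * θ y γ) := by
    rw [hcomm _ _ _ _ (SetLike.mul_mem_graded hxβ hyγ) hα, mul_assoc]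
  have c2 : θ z β * γ * θ y α = (-1 : K) ^ ((n + 1 + t) * (m + 1)) • (θ y α * θ z β * γ) := by
    rw [hcomm _ _ _ _ (SetLike.mul_mem_graded hzβ hγ) hyα, mul_assoc]
  have c3 : β * θ y γ * θ y α = (-1 : K) ^ ((n + (t + 1)) * (m + 1)) • (θ y α * β * θ y γ) := by
    rw [hcomm _ _ _ _ (SetLike.mul_mem_graded hβ hyγ) hyα, mul_assoc]
  have h0 : (-1 : K) ≠ 0 := neg_ne_zero.2 one_ne_zero
  have s1 : (-1 : K) ^ ((n - 1) * (m - 1)) * (-1 : K) ^ (n + t + 1) *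
      (-1 : K) ^ ((n + 1 + (t + 1)) * m) = -(-1 : K) ^ ((m - 1) * (t - 1)) := by
    rw [← zpow_add₀ h0, ← zpow_add₀ h0]
    exact neg_one_zpow_eq_neg_of_cast_zmod_two (by push_cast; ring_nf; reduce_mod_char)
  have s2 : (-1 : K) ^ ((n - 1) * (m - 1)) * (-1 : K) ^ n * (-1 : K) ^ ((n + 1 + t) * (m + 1)) =
      (-1 : K) ^ ((m - 1) * (t - 1)) * (-1 : K) ^ (m + n + 1) := by
    simp only [← zpow_add₀ h0]
    exact neg_one_zpow_eq_of_cast_zmod_two (by push_cast; ring_nf; reduce_mod_char)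
  have s3 : (-1 : K) ^ ((n - 1) * (m - 1)) * (-1 : K) ^ ((n + (t + 1)) * (m + 1)) =
      -((-1 : K) ^ ((m - 1) * (t - 1)) * (-1 : K) ^ m) := by
    rw [← zpow_add₀ h0, ← zpow_add₀ h0]
    exact neg_one_zpow_eq_neg_of_cast_zmod_two (by push_cast; ring_nf; reduce_mod_char)
  rw [jacobiPotential, brktH, brktH]
  simp only [add_mul, smul_mul_assoc]
  rw [c1, c2, c3]
  match_scalars
  · linear_combination s3
  · linear_combination s1
  · linear_combination s2

theorem jacobiTerm_eq_sub [Mul G] [SetLike.GradedMonoid 𝒜] (hcomm : IsGradedCommutative 𝒜)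
    (hθ : ∀ w, IsGradedDerivation 𝒜 (θ w)) (hθmul : ∀ x y : G, θ (x * y) = θ x + θ y)
    (hθcomp : ∀ x y : G, θ x ∘ₗ θ y = 0) {x y z : G} {m n t : ℤ} {α β γ : A}
    (hα : α ∈ 𝒜 m) (hβ : β ∈ 𝒜 n) (hγ : γ ∈ 𝒜 t) :
    jacobiTerm θ x m α y n β z t γ =
      jacobiPotential θ x m α y n β z t γ - jacobiPotential θ y n β z t γ x m α := by
  rw [jacobiTerm_eq_add n β γ (hθmul x y) (hθ y) (hθ z) (hθcomp z x) (hθcomp z y) hα,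
    smul_sub_eq_neg_jacobiPotential hcomm (hθ x) (hθ y) (hθ z) hα hβ hγ, sub_eq_add_neg]

theorem jacobiTerm_add_jacobiTerm_add_jacobiTerm [Mul G] [SetLike.GradedMonoid 𝒜]
    (hcomm : IsGradedCommutative 𝒜) (hθ : ∀ w, IsGradedDerivation 𝒜 (θ w))
    (hθmul : ∀ x y : G, θ (x * y) = θ x + θ y) (hθcomp : ∀ x y : G, θ x ∘ₗ θ y = 0)
    {x y z : G} {m n t : ℤ} {α β γ : A} (hα : α ∈ 𝒜 m) (hβ : β ∈ 𝒜 n) (hγ : γ ∈ 𝒜 t) :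
    jacobiTerm θ x m α y n β z t γ + jacobiTerm θ y n β z t γ x m α +
      jacobiTerm θ z t γ x m α y n β = 0 := by
  rw [jacobiTerm_eq_sub hcomm hθ hθmul hθcomp hα hβ hγ,
    jacobiTerm_eq_sub hcomm hθ hθmul hθcomp hβ hγ hα,
    jacobiTerm_eq_sub hcomm hθ hθmul hθcomp hγ hα hβ]
  abel

theorem smul_brkt_eq_tmul_jacobiTerm [CommGroup G] (x y z : G) (m n t : ℤ) (α β γ : A) :
    (-1 : K) ^ ((m - 1) * (t - 1)) •
        brkt θ (x * y) (m + n + 1) ((-1 : K) ^ m • (θ y α * β) + α * θ x β) z γ =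
      MonoidAlgebra.single (x * y * z) 1 ⊗ₜ jacobiTerm θ x m α y n β z t γ := by
  rw [brkt, ← tmul_smul]
  rfl

end

/-- the bracket on `KG ⊗ H*` satisfies the graded Jacobi identity
for the shift `(KG ⊗ H*)[−1]`:
`(−1)^{(m−1)(t−1)}[[x⊗α, y⊗β], z⊗γ] + (−1)^{(n−1)(m−1)}[[y⊗β, z⊗γ], x⊗α]
  + (−1)^{(t−1)(n−1)}[[z⊗γ, x⊗α], y⊗β] = 0`
(note `[x⊗α, y⊗β] = xy ⊗ δ` with `δ = (−1)^m θ_y(α)·β + α·θ_x(β)` homogeneous of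
degree `m+n+1`). -/
theorem stmt13 {K G A : Type*} [Field K] [CommGroup G] [Ring A] [Algebra K A]
    (𝒜 : ℤ → Submodule K A) [SetLike.GradedMonoid 𝒜]
    (hcomm : ∀ (m n : ℤ) (a b : A), a ∈ 𝒜 m → b ∈ 𝒜 n →
      a * b = ((-1:K)^(m*n)) • (b * a))
    (θ : G → A →ₗ[K] A)
    (hθdeg : ∀ (x : G) (m : ℤ) a, a ∈ 𝒜 m → θ x a ∈ 𝒜 (m+1))
    (hθder : ∀ (x : G) (m : ℤ) (a b : A), a ∈ 𝒜 m →
      θ x (a * b) = θ x a * b + ((-1:K)^m) • (a * θ x b))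
    (hθadd : ∀ x y : G, θ (x*y) = θ x + θ y)
    (hθcomp : ∀ x y : G, (θ x) ∘ₗ (θ y) = 0)
    (x y z : G) (m n t : ℤ) (α β γ : A)
    (hα : α ∈ 𝒜 m) (hβ : β ∈ 𝒜 n) (hγ : γ ∈ 𝒜 t) :
    ((-1:K)^((m-1)*(t-1))) •
        brkt θ (x*y) (m+n+1) (((-1:K)^m) • (θ y α * β) + α * θ x β) z γ
      + ((-1:K)^((n-1)*(m-1))) •
          brkt θ (y*z) (n+t+1) (((-1:K)^n) • (θ z β * γ) + β * θ y γ) x α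
      + ((-1:K)^((t-1)*(n-1))) •
          brkt θ (z*x) (t+m+1) (((-1:K)^t) • (θ x γ * α) + γ * θ z α) y β
      = 0 := by
  have hθ : ∀ w, IsGradedDerivation 𝒜 (θ w) := fun w => ⟨hθdeg w, hθder w⟩
  rw [smul_brkt_eq_tmul_jacobiTerm, smul_brkt_eq_tmul_jacobiTerm, smul_brkt_eq_tmul_jacobiTerm,
    ← mul_rotate y z x, ← mul_rotate x y z, ← tmul_add, ← tmul_add,
    jacobiTerm_add_jacobiTerm_add_jacobiTerm hcomm hθ hθadd hθcomp hα hβ hγ, tmul_zero]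
end
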